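/- arXiv:1202.5962 — 4 statements merged into one kernel-verified Lean document; each statement's English description precedes it below -/
import Mathlib

section
/- The temporal d-torsion of the canonical nonlinear connection of the multi-time Hamilton space of electrodynamics satisfies, at every point (t,x,p): δ(N₁_{(r)b}^{(f)})/δt^a − δ(N₁_{(r)a}^{(f)})/δt^b = χ^f_{gab} p^g_r, i.e., the component R^{(f)}_{(r)ab} equals χ^f_{gab}(t) p^g_r, where χ^f_{gab} is the classical curvature tensor of the Riemannian metric h_{ab}(t). -/
open scoped BigOperators
open Set

noncomputable section

/-- Partial derivative of a real-valued function on `ℝ^k` in the `a`-th coordinate direction. -/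
def pd {k : ℕ} (f : (Fin k → ℝ) → ℝ) (a : Fin k) (t : Fin k → ℝ) : ℝ :=
  fderiv ℝ f t (Pi.single a 1)

/-- The Christoffel symbols `χ^a_{bc}` of a (semi-)Riemannian metric `g`. -/
def christoffel {k : ℕ} (g : (Fin k → ℝ) → Matrix (Fin k) (Fin k) ℝ)
    (a b c : Fin k) (t : Fin k → ℝ) : ℝ :=
  (1 / 2) * ∑ d, (g t)⁻¹ a d *
    (pd (fun s => g s d c) b t + pd (fun s => g s b d) c t - pd (fun s => g s b c) d t)

/-- The curvature tensor `χ^f_{g a b}` of a (semi-)Riemannian metric. -/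
def curvTensor {k : ℕ} (g : (Fin k → ℝ) → Matrix (Fin k) (Fin k) ℝ)
    (f gi a b : Fin k) (t : Fin k → ℝ) : ℝ :=
  pd (christoffel g f b gi) a t - pd (christoffel g f a gi) b t
    + ∑ hh, christoffel g f a hh t * christoffel g hh b gi t
    - ∑ hh, christoffel g f b hh t * christoffel g hh a gi t

/-- The Ricci tensor `χ_{ab} = χ^f_{abf}`. -/
def ricci {k : ℕ} (g : (Fin k → ℝ) → Matrix (Fin k) (Fin k) ℝ)
    (a b : Fin k) (t : Fin k → ℝ) : ℝ :=
  ∑ f, curvTensor g f a b f t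

/-- The scalar curvature `g^{ab} Ric_{ab}`. -/
def scalarCurv {k : ℕ} (g : (Fin k → ℝ) → Matrix (Fin k) (Fin k) ℝ)
    (t : Fin k → ℝ) : ℝ :=
  ∑ a, ∑ b, (g t)⁻¹ a b * ricci g a b t

/-- Partial derivative in a temporal direction of a function on `T × X`. -/
def pdt {m n : ℕ} (f : (Fin m → ℝ) × (Fin n → ℝ) → ℝ) (a : Fin m)
    (q : (Fin m → ℝ) × (Fin n → ℝ)) : ℝ :=
  fderiv ℝ f q (Pi.single a 1, 0)

/-- Partial derivative in a spatial direction of a function on `T × X`. -/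
def pdx {m n : ℕ} (f : (Fin m → ℝ) × (Fin n → ℝ) → ℝ) (i : Fin n)
    (q : (Fin m → ℝ) × (Fin n → ℝ)) : ℝ :=
  fderiv ℝ f q (0, Pi.single i 1)

/-- The local model of the dual 1-jet space: coordinates `(t^a, x^i, p^a_i)`. -/
abbrev Jet (m n : ℕ) := (Fin m → ℝ) × (Fin n → ℝ) × (Fin m → Fin n → ℝ)

/-- `∂/∂t^a` on the dual 1-jet space. -/
def pdtJ {m n : ℕ} (F : Jet m n → ℝ) (a : Fin m) (q : Jet m n) : ℝ :=
  fderiv ℝ F q (Pi.single a 1, 0, 0)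

/-- `∂/∂x^i` on the dual 1-jet space. -/
def pdxJ {m n : ℕ} (F : Jet m n → ℝ) (i : Fin n) (q : Jet m n) : ℝ :=
  fderiv ℝ F q (0, Pi.single i 1, 0)

/-- `∂/∂p^f_r` on the dual 1-jet space. -/
def pdpJ {m n : ℕ} (F : Jet m n → ℝ) (f : Fin m) (r : Fin n) (q : Jet m n) : ℝ :=
  fderiv ℝ F q (0, 0, Pi.single f (Pi.single r 1))

/-- The temporal component `N₁_{(i)b}^{(a)} = χ^a_{bf} p^f_i` of the canonical
nonlinear connection. -/
def N1 {m n : ℕ} (h : (Fin m → ℝ) → Matrix (Fin m) (Fin m) ℝ)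
    (a : Fin m) (i : Fin n) (b : Fin m) (q : Jet m n) : ℝ :=
  ∑ f, christoffel h a b f q.1 * q.2.2 f i

/-- The spatial component
`N₂_{(i)j}^{(a)} = γ^r_{ij}[(2e/m₀) A^{(a)}_{(r)} − p^a_r] − (e/m₀)[∂A^{(a)}_{(i)}/∂x^j + ∂A^{(a)}_{(j)}/∂x^i]`
of the canonical nonlinear connection. -/
def N2 {m n : ℕ} (φ : (Fin n → ℝ) → Matrix (Fin n) (Fin n) ℝ)
    (A : Fin m → Fin n → (Fin m → ℝ) × (Fin n → ℝ) → ℝ) (e m₀ : ℝ)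
    (a : Fin m) (i j : Fin n) (q : Jet m n) : ℝ :=
  ∑ r, christoffel φ r i j q.2.1 * ((2 * e / m₀) * A a r (q.1, q.2.1) - q.2.2 a r)
    - (e / m₀) * (pdx (A a i) j (q.1, q.2.1) + pdx (A a j) i (q.1, q.2.1))

/-- The adapted derivation `δ/δt^a = ∂/∂t^a − N₁_{(r)a}^{(f)} ∂/∂p^f_r`. -/
def deltaT {m n : ℕ} (h : (Fin m → ℝ) → Matrix (Fin m) (Fin m) ℝ)
    (F : Jet m n → ℝ) (a : Fin m) (q : Jet m n) : ℝ :=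
  pdtJ F a q - ∑ f, ∑ r, N1 h f r a q * pdpJ F f r q

/-- The adapted derivation `δ/δx^i = ∂/∂x^i − N₂_{(r)i}^{(f)} ∂/∂p^f_r`. -/
def deltaX {m n : ℕ} (φ : (Fin n → ℝ) → Matrix (Fin n) (Fin n) ℝ)
    (A : Fin m → Fin n → (Fin m → ℝ) × (Fin n → ℝ) → ℝ) (e m₀ : ℝ)
    (F : Jet m n → ℝ) (i : Fin n) (q : Jet m n) : ℝ :=
  pdxJ F i q - ∑ f, ∑ r, N2 φ A e m₀ f r i q * pdpJ F f r q



section AuxLemmas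

lemma contDiffAt_det_aux {E : Type*} [NormedAddCommGroup E] [NormedSpace ℝ E] {k : ℕ}
    {M : E → Matrix (Fin k) (Fin k) ℝ} {t : E}
    (hM : ∀ i j, ContDiffAt ℝ (⊤ : ℕ∞) (fun s => M s i j) t) :
    ContDiffAt ℝ (⊤ : ℕ∞) (fun s => (M s).det) t := by
  have : (fun s => (M s).det)
      = fun s => ∑ σ : Equiv.Perm (Fin k), ((Equiv.Perm.sign σ : ℤ) : ℝ) * ∏ i, M s (σ i) i := by
    funext s
    rw [Matrix.det_apply]
    refine Finset.sum_congr rfl fun σ _ => ?_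
    simp [Units.smul_def, zsmul_eq_mul]
  rw [this]
  exact ContDiffAt.sum fun σ _ =>
    contDiffAt_const.mul (contDiffAt_prod fun i _ => hM (σ i) i)

lemma contDiffAt_inv_entry {E : Type*} [NormedAddCommGroup E] [NormedSpace ℝ E] {k : ℕ}
    {M : E → Matrix (Fin k) (Fin k) ℝ} {t : E}
    (hM : ∀ i j, ContDiffAt ℝ (⊤ : ℕ∞) (fun s => M s i j) t)
    (hdet : (M t).det ≠ 0) (a d : Fin k) :
    ContDiffAt ℝ (⊤ : ℕ∞) (fun s => (M s)⁻¹ a d) t := by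
  have h1 : (fun s => (M s)⁻¹ a d)
      = fun s => ((M s).det)⁻¹ * ((M s).updateRow d (Pi.single a 1)).det := by
    funext s
    rw [Matrix.inv_def, ← Matrix.adjugate_apply]
    simp [Ring.inverse_eq_inv', Matrix.smul_apply, smul_eq_mul]
  rw [h1]
  refine ((contDiffAt_det_aux hM).inv hdet).mul (contDiffAt_det_aux fun i j => ?_)
  simp only [Matrix.updateRow_apply]
  by_cases hid : i = d
  · simp only [hid, if_true]; exact contDiffAt_const
  · simp only [hid, if_false]; exact hM i j

lemma contDiffAt_pd {k : ℕ} {f : (Fin k → ℝ) → ℝ} {t : Fin k → ℝ}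
    (hf : ContDiffAt ℝ (⊤ : ℕ∞) f t) (b : Fin k) :
    ContDiffAt ℝ (⊤ : ℕ∞) (fun s => pd f b s) t := by
  have h1 : ContDiffAt ℝ (⊤ : ℕ∞) (fderiv ℝ f) t := hf.fderiv_right (by simp)
  exact (ContinuousLinearMap.apply ℝ ℝ (Pi.single b 1)).contDiff.contDiffAt.comp t h1

lemma contDiffAt_christoffel {k : ℕ}
    {h : (Fin k → ℝ) → Matrix (Fin k) (Fin k) ℝ} {T : Set (Fin k → ℝ)} (hT : IsOpen T)
    (hsm : ∀ a b, ContDiffOn ℝ (⊤ : ℕ∞) (fun t => h t a b) T)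
    (hdet : ∀ s ∈ T, (h s).det ≠ 0) {t : Fin k → ℝ} (ht : t ∈ T) (a b c : Fin k) :
    ContDiffAt ℝ (⊤ : ℕ∞) (christoffel h a b c) t := by
  have hEnt : ∀ i j, ContDiffAt ℝ (⊤ : ℕ∞) (fun s => h s i j) t :=
    fun i j => (hsm i j).contDiffAt (hT.mem_nhds ht)
  unfold christoffel
  refine contDiffAt_const.mul (ContDiffAt.sum fun d _ => ?_)
  refine (contDiffAt_inv_entry hEnt (hdet t ht) a d).mul ?_
  exact ((contDiffAt_pd (hEnt d c) b).add (contDiffAt_pd (hEnt b d) c)).sub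
    (contDiffAt_pd (hEnt b c) d)

lemma fderiv_N1_apply {m n : ℕ} (h : (Fin m → ℝ) → Matrix (Fin m) (Fin m) ℝ)
    {t : Fin m → ℝ} (x : Fin n → ℝ) (p : Fin m → Fin n → ℝ)
    (f : Fin m) (r : Fin n) (b : Fin m)
    (hχ : ∀ g, DifferentiableAt ℝ (christoffel h f b g) t)
    (v : (Fin m → ℝ) × (Fin n → ℝ) × (Fin m → Fin n → ℝ)) :
    fderiv ℝ (fun q : Jet m n => N1 h f r b q) (t, x, p) v
      = ∑ g, (fderiv ℝ (christoffel h f b g) t v.1 * p g r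
              + christoffel h f b g t * v.2.2 g r) := by
  set P : Fin m → (Jet m n →L[ℝ] ℝ) := fun g =>
    ((ContinuousLinearMap.proj r).comp (ContinuousLinearMap.proj g)).comp
      ((ContinuousLinearMap.snd ℝ (Fin n → ℝ) (Fin m → Fin n → ℝ)).comp
        (ContinuousLinearMap.snd ℝ (Fin m → ℝ) ((Fin n → ℝ) × (Fin m → Fin n → ℝ)))) with hP
  have hD : HasFDerivAt (fun q : Jet m n => N1 h f r b q)
      (∑ g, ((christoffel h f b g ((t, x, p) : Jet m n).1) • (P g)
        + (p g r) • ((fderiv ℝ (christoffel h f b g) t).comp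
            (ContinuousLinearMap.fst ℝ (Fin m → ℝ) ((Fin n → ℝ) × (Fin m → Fin n → ℝ))))))
      (t, x, p) := by
    refine HasFDerivAt.fun_sum fun g _ => ?_
    have hu : HasFDerivAt (fun q : Jet m n => christoffel h f b g q.1)
        ((fderiv ℝ (christoffel h f b g) t).comp
          (ContinuousLinearMap.fst ℝ (Fin m → ℝ) ((Fin n → ℝ) × (Fin m → Fin n → ℝ))))
        (t, x, p) :=
      ((hχ g).hasFDerivAt).comp (f := Prod.fst) (t, x, p) (hasFDerivAt_fst)
    have hv : HasFDerivAt (fun q : Jet m n => q.2.2 g r) (P g) (t, x, p) :=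
      (P g).hasFDerivAt
    exact hu.mul hv
  rw [hD.fderiv]
  simp only [ContinuousLinearMap.sum_apply, ContinuousLinearMap.add_apply,
    ContinuousLinearMap.smul_apply, ContinuousLinearMap.comp_apply,
    ContinuousLinearMap.coe_fst', ContinuousLinearMap.coe_snd',
    ContinuousLinearMap.proj_apply, smul_eq_mul, hP]
  exact Finset.sum_congr rfl fun g _ => by ring

end AuxLemmas

/-- The temporal d-torsion of the canonical nonlinear connection of
the multi-time Hamilton space of electrodynamics satisfies
`δ(N₁_{(r)b}^{(f)})/δt^a − δ(N₁_{(r)a}^{(f)})/δt^b = χ^f_{gab} p^g_r`, where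
`χ^f_{gab}` is the curvature tensor of the Riemannian metric `h`. -/
theorem temporal_torsion_of_electrodynamics
    {m n : ℕ} (hm : 1 ≤ m) (hn : 1 ≤ n)
    (T : Set (Fin m → ℝ)) (X : Set (Fin n → ℝ)) (hT : IsOpen T) (hX : IsOpen X)
    (h : (Fin m → ℝ) → Matrix (Fin m) (Fin m) ℝ)
    (hsm : ∀ a b, ContDiffOn ℝ (⊤ : ℕ∞) (fun t => h t a b) T)
    (hpos : ∀ t ∈ T, (h t).PosDef)
    (φ : (Fin n → ℝ) → Matrix (Fin n) (Fin n) ℝ)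
    (φsm : ∀ i j, ContDiffOn ℝ (⊤ : ℕ∞) (fun x => φ x i j) X)
    (φsymm : ∀ x ∈ X, (φ x).IsSymm) (φinv : ∀ x ∈ X, IsUnit (φ x).det)
    (m₀ e : ℝ) (hm₀ : m₀ ≠ 0)
    (A : Fin m → Fin n → (Fin m → ℝ) × (Fin n → ℝ) → ℝ)
    (hA : ∀ a i, ContDiffOn ℝ (⊤ : ℕ∞) (A a i) (T ×ˢ X)) :
    ∀ t ∈ T, ∀ x ∈ X, ∀ p : Fin m → Fin n → ℝ,
      ∀ f : Fin m, ∀ r : Fin n, ∀ a b : Fin m,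
        deltaT h (fun q => N1 h f r b q) a (t, x, p)
          - deltaT h (fun q => N1 h f r a q) b (t, x, p)
        = ∑ g, curvTensor h f g a b t * p g r := by
  intro t ht x hx p f r a b
  have hdet : ∀ s ∈ T, (h s).det ≠ 0 := fun s hs => ne_of_gt (hpos s hs).det_pos
  have hχ : ∀ f b g, DifferentiableAt ℝ (christoffel h f b g) t := fun f b g =>
    (contDiffAt_christoffel hT hsm hdet ht f b g).differentiableAt (by simp)
  have key1 : ∀ (b c : Fin m), pdtJ (fun q => N1 h f r b q) c (t, x, p)
      = ∑ g, pd (christoffel h f b g) c t * p g r := by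
    intro b c
    rw [pdtJ, fderiv_N1_apply h x p f r b (fun g => hχ f b g)]
    simp [pd]
  have key2 : ∀ (b : Fin m) (f' : Fin m) (r' : Fin n),
      pdpJ (fun q => N1 h f r b q) f' r' (t, x, p)
      = christoffel h f b f' t * (if r = r' then 1 else 0) := by
    intro b f' r'
    rw [pdpJ, fderiv_N1_apply h x p f r b (fun g => hχ f b g)]
    simp only [Pi.zero_apply, map_zero, zero_mul, zero_add]
    have : ∀ g : Fin m, (Pi.single f' (Pi.single r' (1:ℝ)) : Fin m → Fin n → ℝ) g r
        = if f' = g then (if r = r' then (1:ℝ) else 0) else 0 := by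
      intro g
      simp [Pi.single_apply, apply_ite (fun (w : Fin n → ℝ) => w r), eq_comm]
    simp only [this, mul_ite, mul_one, mul_zero, Finset.sum_ite_eq, Finset.mem_univ, if_true]
  have hN1 : ∀ (c : Fin m) (f' : Fin m) (r' : Fin n),
      N1 h f' r' c ((t, x, p) : Jet m n) = ∑ g, christoffel h f' c g t * p g r' :=
    fun _ _ _ => rfl
  have swap : ∀ (c d : Fin m),
      ∑ f', (∑ g, christoffel h f' c g t * p g r) * christoffel h f d f' t
      = ∑ g, (∑ hh, christoffel h f d hh t * christoffel h hh c g t) * p g r := by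
    intro c d
    simp only [Finset.sum_mul]
    rw [Finset.sum_comm]
    exact Finset.sum_congr rfl fun g _ => Finset.sum_congr rfl fun hh _ => by ring
  simp only [deltaT, key1, key2, hN1]
  simp only [mul_ite, mul_one, mul_zero, Finset.sum_ite_eq, Finset.mem_univ, if_true]
  rw [swap a b, swap b a]
  have hcurv : ∀ g, curvTensor h f g a b t * p g r
      = pd (christoffel h f b g) a t * p g r - pd (christoffel h f a g) b t * p g r
        + (∑ hh, christoffel h f a hh t * christoffel h hh b g t) * p g r
        - (∑ hh, christoffel h f b hh t * christoffel h hh a g t) * p g r := by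
    intro g; rw [curvTensor]; ring
  simp only [hcurv, Finset.sum_sub_distrib, Finset.sum_add_distrib]
  ring


end
end

section
/- The mixed d-torsion of the canonical nonlinear connection of the multi-time Hamilton space of electrodynamics satisfies, at every point (t,x,p): δ(N₁_{(r)a}^{(f)})/δx^j − δ(N₂_{(r)j}^{(f)})/δt^a = −(2e/m₀) γ^s_{rj} A^{(f)}_{(s);a} + (e/m₀)[∂A^{(f)}_{(r)}/∂x^j + ∂A^{(f)}_{(j)}/∂x^r]_{;a}. In particular this component R^{(f)}_{(r)aj} of the torsion does not depend on the polymomenta p. -/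
open scoped BigOperators
open Set

noncomputable section

section AuxLemmas

variable {E : Type*} [NormedAddCommGroup E] [NormedSpace ℝ E] {S : Set E}

lemma contDiffOn_finset_prod {ι : Type*} {s : Finset ι} {f : ι → E → ℝ}
    (h : ∀ i ∈ s, ContDiffOn ℝ (⊤ : ℕ∞) (f i) S) :
    ContDiffOn ℝ (⊤ : ℕ∞) (fun x => ∏ i ∈ s, f i x) S := by
  classical
  induction s using Finset.induction_on with
  | empty => simpa using contDiffOn_const
  | @insert a s hx ih =>
      simp only [Finset.prod_insert hx]
      exact (h a (Finset.mem_insert_self a s)).mul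
        (ih fun i hi => h i (Finset.mem_insert_of_mem hi))

lemma contDiffOn_det {k : ℕ} {M : E → Matrix (Fin k) (Fin k) ℝ}
    (hM : ∀ a b, ContDiffOn ℝ (⊤ : ℕ∞) (fun x => M x a b) S) :
    ContDiffOn ℝ (⊤ : ℕ∞) (fun x => (M x).det) S := by
  simp only [Matrix.det_apply]
  apply ContDiffOn.sum
  intro σ _
  have h1 : ContDiffOn ℝ (⊤ : ℕ∞) (fun x => ∏ i, M x (σ i) i) S :=
    contDiffOn_finset_prod fun i _ => hM (σ i) i
  have h2 := contDiffOn_const (c := ((Equiv.Perm.sign σ : ℤ) : ℝ)) (s := S) |>.mul h1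
  have h3 : (fun x => Equiv.Perm.sign σ • ∏ i, M x (σ i) i)
      = fun x => ((Equiv.Perm.sign σ : ℤ) : ℝ) * ∏ i, M x (σ i) i := by
    funext x; rw [Units.smul_def, zsmul_eq_mul]
  rw [h3]; exact h2

lemma contDiffOn_adjugate {k : ℕ} {M : E → Matrix (Fin k) (Fin k) ℝ}
    (hM : ∀ a b, ContDiffOn ℝ (⊤ : ℕ∞) (fun x => M x a b) S) (a b : Fin k) :
    ContDiffOn ℝ (⊤ : ℕ∞) (fun x => (M x).adjugate a b) S := by
  simp only [Matrix.adjugate_apply]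
  apply contDiffOn_det
  intro a' b'
  simp only [Matrix.updateRow_apply]
  by_cases hab : a' = b
  · simp only [hab, if_pos rfl]; exact contDiffOn_const
  · simpa [hab] using hM a' b'

lemma contDiffOn_inv_entry {k : ℕ} {M : E → Matrix (Fin k) (Fin k) ℝ}
    (hM : ∀ a b, ContDiffOn ℝ (⊤ : ℕ∞) (fun x => M x a b) S)
    (hdet : ∀ x ∈ S, IsUnit (M x).det) (a b : Fin k) :
    ContDiffOn ℝ (⊤ : ℕ∞) (fun x => (M x)⁻¹ a b) S := by
  have key : ∀ x, (M x)⁻¹ a b = ((M x).det)⁻¹ * (M x).adjugate a b := by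
    intro x
    rw [Matrix.inv_def, Matrix.smul_apply, Ring.inverse_eq_inv', smul_eq_mul]
  simp only [key]
  exact ((contDiffOn_det hM).inv fun x hx => (hdet x hx).ne_zero).mul
    (contDiffOn_adjugate hM a b)

lemma contDiffOn_pd {k : ℕ} {f : (Fin k → ℝ) → ℝ} {S : Set (Fin k → ℝ)}
    (hS : IsOpen S) (hf : ContDiffOn ℝ (⊤ : ℕ∞) f S) (b : Fin k) :
    ContDiffOn ℝ (⊤ : ℕ∞) (pd f b) S := by
  unfold pd
  exact (hf.fderiv_of_isOpen hS (by simp)).clm_apply contDiffOn_const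

lemma contDiffOn_christoffel {k : ℕ} {g : (Fin k → ℝ) → Matrix (Fin k) (Fin k) ℝ}
    {S : Set (Fin k → ℝ)} (hS : IsOpen S)
    (hg : ∀ a b, ContDiffOn ℝ (⊤ : ℕ∞) (fun t => g t a b) S)
    (hdet : ∀ t ∈ S, IsUnit (g t).det) (a b c : Fin k) :
    ContDiffOn ℝ (⊤ : ℕ∞) (christoffel g a b c) S := by
  unfold christoffel
  apply contDiffOn_const.mul
  apply ContDiffOn.sum
  intro d _
  exact (contDiffOn_inv_entry hg hdet a d).mul
    (((contDiffOn_pd hS (hg d c) b).add (contDiffOn_pd hS (hg b d) c)).sub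
      (contDiffOn_pd hS (hg b c) d))

lemma contDiffOn_pdx {m n : ℕ} {f : (Fin m → ℝ) × (Fin n → ℝ) → ℝ}
    {S : Set ((Fin m → ℝ) × (Fin n → ℝ))} (hS : IsOpen S)
    (hf : ContDiffOn ℝ (⊤ : ℕ∞) f S) (i : Fin n) :
    ContDiffOn ℝ (⊤ : ℕ∞) (fun q => pdx f i q) S := by
  unfold pdx
  exact (hf.fderiv_of_isOpen hS (by simp)).clm_apply contDiffOn_const

lemma sum_algebra {m n : ℕ} (c1 c2 : ℝ) (χ : Fin m → ℝ) (γ : Fin n → ℝ)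
    (Av P : Fin m → Fin n → ℝ) (B : Fin m → ℝ) (dA : Fin n → ℝ) (dB : ℝ) :
    (- ∑ f', (∑ s, γ s * (c1 * Av f' s - P f' s) - c2 * B f') * χ f')
      - ((∑ s, γ s * (c1 * dA s)) - c2 * dB + ∑ r', (∑ g, χ g * P g r') * γ r')
    = -c1 * ∑ s, γ s * (dA s + ∑ g, Av g s * χ g) + c2 * (dB + ∑ g, B g * χ g) := by
  have h1 : ∑ r', (∑ g, χ g * P g r') * γ r' = ∑ f', (∑ s, γ s * P f' s) * χ f' := by
    simp only [Finset.sum_mul]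
    rw [Finset.sum_comm]
    exact Finset.sum_congr rfl fun g _ => Finset.sum_congr rfl fun r' _ => by ring
  have h2 : ∑ s, γ s * (dA s + ∑ g, Av g s * χ g)
      = ∑ s, γ s * dA s + ∑ f', (∑ s, γ s * Av f' s) * χ f' := by
    simp only [mul_add, Finset.mul_sum, Finset.sum_mul, Finset.sum_add_distrib]
    congr 1
    rw [Finset.sum_comm]
    exact Finset.sum_congr rfl fun g _ => Finset.sum_congr rfl fun s _ => by ring
  have h3 : ∀ f', ∑ s, γ s * (c1 * Av f' s - P f' s)
      = c1 * (∑ s, γ s * Av f' s) - ∑ s, γ s * P f' s := by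
    intro f'
    rw [Finset.mul_sum, ← Finset.sum_sub_distrib]
    exact Finset.sum_congr rfl fun _ _ => by ring
  have h4 : ∑ s, γ s * (c1 * dA s) = c1 * ∑ s, γ s * dA s := by
    rw [Finset.mul_sum]
    exact Finset.sum_congr rfl fun _ _ => by ring
  simp only [h1, h2, h3, h4]
  simp only [sub_mul, Finset.sum_sub_distrib, mul_assoc, ← Finset.mul_sum]
  ring

lemma christoffel_symm_aux {k : ℕ} {g : (Fin k → ℝ) → Matrix (Fin k) (Fin k) ℝ}
    {S : Set (Fin k → ℝ)} (hS : IsOpen S) (hsymm : ∀ u ∈ S, (g u).IsSymm)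
    (a b c : Fin k) {t : Fin k → ℝ} (ht : t ∈ S) :
    christoffel g a b c t = christoffel g a c b t := by
  have hpd : ∀ (i j b' : Fin k), pd (fun s => g s i j) b' t = pd (fun s => g s j i) b' t := by
    intro i j b'
    unfold pd
    congr 1
    apply Filter.EventuallyEq.fderiv_eq
    filter_upwards [hS.mem_nhds ht] with u hu
    exact (hsymm u hu).apply j i
  unfold christoffel
  congr 1
  apply Finset.sum_congr rfl
  intro d _
  rw [hpd d c b, hpd b d c, hpd b c d]
  ring

end AuxLemmas
/-- The mixed d-torsion of the canonical nonlinear connection of the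
multi-time Hamilton space of electrodynamics satisfies
`δ(N₁_{(r)a}^{(f)})/δx^j − δ(N₂_{(r)j}^{(f)})/δt^a
  = −(2e/m₀) γ^s_{rj} A^{(f)}_{(s);a} + (e/m₀)[∂A^{(f)}_{(r)}/∂x^j + ∂A^{(f)}_{(j)}/∂x^r]_{;a}`;
in particular this torsion component `R^{(f)}_{(r)aj}` does not depend on the
polymomenta `p`. -/
theorem mixed_torsion_of_electrodynamics
    {m n : ℕ} (hm : 1 ≤ m) (hn : 1 ≤ n)
    (T : Set (Fin m → ℝ)) (X : Set (Fin n → ℝ)) (hT : IsOpen T) (hX : IsOpen X)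
    (h : (Fin m → ℝ) → Matrix (Fin m) (Fin m) ℝ)
    (hsm : ∀ a b, ContDiffOn ℝ (⊤ : ℕ∞) (fun t => h t a b) T)
    (hpos : ∀ t ∈ T, (h t).PosDef)
    (φ : (Fin n → ℝ) → Matrix (Fin n) (Fin n) ℝ)
    (φsm : ∀ i j, ContDiffOn ℝ (⊤ : ℕ∞) (fun x => φ x i j) X)
    (φsymm : ∀ x ∈ X, (φ x).IsSymm) (φinv : ∀ x ∈ X, IsUnit (φ x).det)
    (m₀ e : ℝ) (hm₀ : m₀ ≠ 0)
    (A : Fin m → Fin n → (Fin m → ℝ) × (Fin n → ℝ) → ℝ)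
    (hA : ∀ a i, ContDiffOn ℝ (⊤ : ℕ∞) (A a i) (T ×ˢ X)) :
    ∀ t ∈ T, ∀ x ∈ X, ∀ p : Fin m → Fin n → ℝ,
      ∀ f : Fin m, ∀ r : Fin n, ∀ a : Fin m, ∀ j : Fin n,
        deltaX φ A e m₀ (fun q => N1 h f r a q) j (t, x, p)
          - deltaT h (fun q => N2 φ A e m₀ f r j q) a (t, x, p)
        = -(2 * e / m₀) * ∑ s, christoffel φ s r j x *
              -- `A^{(f)}_{(s);a} = ∂A^{(f)}_{(s)}/∂t^a + A^{(g)}_{(s)} χ^f_{ga}`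
              (pdt (A f s) a (t, x) + ∑ g, A g s (t, x) * christoffel h f g a t)
          + (e / m₀) *
              -- `[∂A^{(f)}_{(r)}/∂x^j + ∂A^{(f)}_{(j)}/∂x^r]_{;a}`
              (pdt (fun q => pdx (A f r) j q + pdx (A f j) r q) a (t, x)
                + ∑ g, (pdx (A g r) j (t, x) + pdx (A g j) r (t, x))
                    * christoffel h f g a t) := by
  classical
  intro t ht x hx p f r a j
  have hTX : IsOpen (T ×ˢ X) := hT.prod hX
  have htx : ((t, x) : (Fin m → ℝ) × (Fin n → ℝ)) ∈ T ×ˢ X := ⟨ht, hx⟩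
  have hdeth : ∀ u ∈ T, IsUnit (h u).det := fun u hu =>
    isUnit_iff_ne_zero.mpr (hpos u hu).det_pos.ne'
  have hχ : ∀ b c d : Fin m, DifferentiableAt ℝ (christoffel h b c d) t := fun b c d =>
    ((contDiffOn_christoffel hT hsm hdeth b c d).contDiffAt (hT.mem_nhds ht)).differentiableAt
      (by simp)
  have hγ : ∀ s i' j' : Fin n, DifferentiableAt ℝ (christoffel φ s i' j') x := fun s i' j' =>
    ((contDiffOn_christoffel hX φsm φinv s i' j').contDiffAt (hX.mem_nhds hx)).differentiableAt
      (by simp)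
  have hAd : ∀ (b : Fin m) (i : Fin n), DifferentiableAt ℝ (A b i) (t, x) := fun b i =>
    ((hA b i).contDiffAt (hTX.mem_nhds htx)).differentiableAt (by simp)
  have hBd : ∀ (b : Fin m) (i' j' : Fin n),
      DifferentiableAt ℝ (fun y => pdx (A b i') j' y) (t, x) := fun b i' j' =>
    ((contDiffOn_pdx hTX (hA b i') j').contDiffAt (hTX.mem_nhds htx)).differentiableAt (by simp)
  set q0 : Jet m n := (t, x, p) with hq0
  -- continuous linear projections
  set π1 : Jet m n →L[ℝ] (Fin m → ℝ) := ContinuousLinearMap.fst ℝ _ _ with hπ1def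
  set π2 : Jet m n →L[ℝ] (Fin n → ℝ) :=
    (ContinuousLinearMap.fst ℝ _ _).comp
      (ContinuousLinearMap.snd ℝ (Fin m → ℝ) ((Fin n → ℝ) × (Fin m → Fin n → ℝ))) with hπ2def
  set πTX : Jet m n →L[ℝ] ((Fin m → ℝ) × (Fin n → ℝ)) := π1.prod π2 with hπTXdef
  set πP : Fin m → Fin n → (Jet m n →L[ℝ] ℝ) := fun g s =>
    (ContinuousLinearMap.proj s).comp ((ContinuousLinearMap.proj g).comp
      ((ContinuousLinearMap.snd ℝ (Fin n → ℝ) (Fin m → Fin n → ℝ)).comp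
        (ContinuousLinearMap.snd ℝ (Fin m → ℝ) ((Fin n → ℝ) × (Fin m → Fin n → ℝ)))))
    with hπPdef
  have hπ1 : HasFDerivAt (fun q : Jet m n => q.1) π1 q0 := hasFDerivAt_fst
  have hπ2 : HasFDerivAt (fun q : Jet m n => q.2.1) π2 q0 := π2.hasFDerivAt
  have hπTX : HasFDerivAt (fun q : Jet m n => (q.1, q.2.1)) πTX q0 := πTX.hasFDerivAt
  have hπP : ∀ g s, HasFDerivAt (fun q : Jet m n => q.2.2 g s) (πP g s) q0 := fun g s =>
    (πP g s).hasFDerivAt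
  -- derivative of N1
  have hN1 : HasFDerivAt (fun q : Jet m n => N1 h f r a q)
      (∑ g, (christoffel h f a g t • πP g r +
        p g r • ((fderiv ℝ (christoffel h f a g) t).comp π1))) q0 := by
    unfold N1
    apply HasFDerivAt.fun_sum
    intro g _
    have hc : HasFDerivAt (fun q : Jet m n => christoffel h f a g q.1)
        ((fderiv ℝ (christoffel h f a g) t).comp π1) q0 :=
      by have := ((hχ f a g).hasFDerivAt).comp q0 hπ1; exact this
    exact hc.mul (hπP g r)
  have hfd1 : ∀ v : (Fin m → ℝ) × (Fin n → ℝ) × (Fin m → Fin n → ℝ),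
      fderiv ℝ (fun q : Jet m n => N1 h f r a q) q0 v
        = ∑ g, (christoffel h f a g t * v.2.2 g r
            + p g r * fderiv ℝ (christoffel h f a g) t v.1) := by
    intro v
    rw [hN1.fderiv]
    simp [hπ1def, hπPdef, ContinuousLinearMap.sum_apply]
  have e1 : pdxJ (fun q => N1 h f r a q) j q0 = 0 := by
    rw [pdxJ, hfd1]
    simp
  have e2 : ∀ (f' : Fin m) (r' : Fin n), pdpJ (fun q => N1 h f r a q) f' r' q0
      = christoffel h f a f' t * (if r = r' then 1 else 0) := by
    intro f' r'
    rw [pdpJ, hfd1]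
    simp [Pi.single_apply, ite_apply, mul_ite, Finset.sum_ite_eq']
  have eX : deltaX φ A e m₀ (fun q => N1 h f r a q) j q0
      = - ∑ f', N2 φ A e m₀ f' r j q0 * christoffel h f a f' t := by
    rw [deltaX, e1]
    simp only [e2]
    simp [mul_ite, Finset.sum_ite_eq]
  -- derivative of N2
  have hN2 : HasFDerivAt (fun q : Jet m n => N2 φ A e m₀ f r j q)
      ((∑ s, (christoffel φ s r j x •
          ((2 * e / m₀) • ((fderiv ℝ (A f s) (t, x)).comp πTX) - πP f s)
        + ((2 * e / m₀) * A f s (t, x) - p f s) •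
          ((fderiv ℝ (christoffel φ s r j) x).comp π2)))
       - (e / m₀) • (((fderiv ℝ (fun y => pdx (A f r) j y) (t, x)).comp πTX)
          + ((fderiv ℝ (fun y => pdx (A f j) r y) (t, x)).comp πTX))) q0 := by
    unfold N2
    apply HasFDerivAt.sub
    · apply HasFDerivAt.fun_sum
      intro s _
      have hc : HasFDerivAt (fun q : Jet m n => christoffel φ s r j q.2.1)
          ((fderiv ℝ (christoffel φ s r j) x).comp π2) q0 :=
        by have := ((hγ s r j).hasFDerivAt).comp q0 hπ2; exact this
      have hd : HasFDerivAt
          (fun q : Jet m n => (2 * e / m₀) * A f s (q.1, q.2.1) - q.2.2 f s)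
          ((2 * e / m₀) • ((fderiv ℝ (A f s) (t, x)).comp πTX) - πP f s) q0 :=
        (((hAd f s).hasFDerivAt.comp q0 hπTX).const_mul _).sub (hπP f s)
      exact hc.mul hd
    · exact (((hBd f r j).hasFDerivAt.comp q0 hπTX).add
        ((hBd f j r).hasFDerivAt.comp q0 hπTX)).const_mul _
  have hfd2 : ∀ v : (Fin m → ℝ) × (Fin n → ℝ) × (Fin m → Fin n → ℝ),
      fderiv ℝ (fun q : Jet m n => N2 φ A e m₀ f r j q) q0 v
      = (∑ s, (christoffel φ s r j x *
            ((2 * e / m₀) * fderiv ℝ (A f s) (t, x) (v.1, v.2.1) - v.2.2 f s)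
          + ((2 * e / m₀) * A f s (t, x) - p f s) *
            fderiv ℝ (christoffel φ s r j) x v.2.1))
        - (e / m₀) * (fderiv ℝ (fun y => pdx (A f r) j y) (t, x) (v.1, v.2.1)
          + fderiv ℝ (fun y => pdx (A f j) r y) (t, x) (v.1, v.2.1)) := by
    intro v
    rw [hN2.fderiv]
    simp [hπ1def, hπ2def, hπTXdef, hπPdef, ContinuousLinearMap.sum_apply, smul_eq_mul,
      mul_sub, mul_add]
  have e3 : pdtJ (fun q => N2 φ A e m₀ f r j q) a q0
      = (∑ s, christoffel φ s r j x * ((2 * e / m₀) * pdt (A f s) a (t, x)))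
        - (e / m₀) * (pdt (fun y => pdx (A f r) j y) a (t, x)
            + pdt (fun y => pdx (A f j) r y) a (t, x)) := by
    rw [pdtJ, hfd2]
    simp [pdt]
  have e4 : ∀ (f' : Fin m) (r' : Fin n), pdpJ (fun q => N2 φ A e m₀ f r j q) f' r' q0
      = if f = f' then -(christoffel φ r' r j x) else 0 := by
    intro f' r'
    rw [pdpJ, hfd2]
    by_cases hff : f = f'
    · subst hff
      simp [Pi.single_apply, ite_apply, mul_ite, Finset.sum_ite_eq', Prod.mk_zero_zero]
    · simp [Pi.single_apply, hff, Prod.mk_zero_zero]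
  have eT : deltaT h (fun q => N2 φ A e m₀ f r j q) a q0
      = (∑ s, christoffel φ s r j x * ((2 * e / m₀) * pdt (A f s) a (t, x)))
        - (e / m₀) * (pdt (fun y => pdx (A f r) j y) a (t, x)
            + pdt (fun y => pdx (A f j) r y) a (t, x))
        + ∑ r', N1 h f r' a q0 * christoffel φ r' r j x := by
    rw [deltaT, e3]
    simp only [e4]
    simp [mul_ite, mul_neg, Finset.sum_neg_distrib]
  have hsum : pdt (fun q => pdx (A f r) j q + pdx (A f j) r q) a (t, x)
      = pdt (fun q => pdx (A f r) j q) a (t, x) + pdt (fun q => pdx (A f j) r q) a (t, x) := by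
    unfold pdt
    rw [fderiv_fun_add (hBd f r j) (hBd f j r)]
    simp
  have hN2val : ∀ f', N2 φ A e m₀ f' r j q0
      = ∑ s, christoffel φ s r j x * ((2 * e / m₀) * A f' s (t, x) - p f' s)
        - (e / m₀) * (pdx (A f' r) j (t, x) + pdx (A f' j) r (t, x)) := fun f' => rfl
  have hN1val : ∀ r', N1 h f r' a q0 = ∑ g, christoffel h f a g t * p g r' := fun r' => rfl
  have hsymmT : ∀ u ∈ T, (h u).IsSymm := by
    intro u hu
    have hh := (hpos u hu).1
    ext i j'
    simpa [Matrix.conjTranspose_apply] using (congrFun (congrFun hh j') i).symm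
  have hcsw : ∀ g' : Fin m, christoffel h f a g' t = christoffel h f g' a t := fun g' =>
    christoffel_symm_aux hT hsymmT f a g' ht
  rw [eX, eT, hsum]
  simp only [hN2val, hN1val, hcsw]
  exact sum_algebra (2 * e / m₀) (e / m₀) (fun g => christoffel h f g a t)
    (fun s => christoffel φ s r j x) (fun g s => A g s (t, x)) (fun g s => p g s)
    (fun g => pdx (A g r) j (t, x) + pdx (A g j) r (t, x))
    (fun s => pdt (A f s) a (t, x))
    (pdt (fun q => pdx (A f r) j q) a (t, x) + pdt (fun q => pdx (A f j) r q) a (t, x))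

end
end

section
/- The spatial metrical deflection d-tensor of the multi-time Hamilton space of electrodynamics satisfies, at every point (t,x,p): Δ^{(i)}_{(a)j} := h*_{af} φ^{ir} p^f_{r|j} = (e/(4m₀²c)) h_{af} φ^{ir} [ A^{(f)}_{(r):j} + A^{(f)}_{(j):r} ], where p^f_{r|j} := δp^f_r/δx^j − γ^s_{rj} p^f_s and h*_{ab} = (4m₀c)^{−1} h_{ab}. In particular Δ^{(i)}_{(a)j} does not depend on the polymomenta p. -/
open scoped BigOperators
open Set

noncomputable section

/-- The coordinate projection `(t,x,p) ↦ p^f_r` as a continuous linear map. -/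
def coordP {m n : ℕ} (f : Fin m) (r : Fin n) : Jet m n →L[ℝ] ℝ :=
  (ContinuousLinearMap.proj r).comp ((ContinuousLinearMap.proj f).comp
    ((ContinuousLinearMap.snd ℝ (Fin n → ℝ) (Fin m → Fin n → ℝ)).comp
      (ContinuousLinearMap.snd ℝ (Fin m → ℝ) _)))

lemma pdxJ_coord {m n : ℕ} (f : Fin m) (r j : Fin n) (q : Jet m n) :
    pdxJ (fun q : Jet m n => q.2.2 f r) j q = 0 := by
  have h : (fun q : Jet m n => q.2.2 f r) = ⇑(coordP f r) := rfl
  rw [pdxJ, h, ContinuousLinearMap.fderiv]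
  rfl

lemma pdpJ_coord {m n : ℕ} (f f' : Fin m) (r r' : Fin n) (q : Jet m n) :
    pdpJ (fun q : Jet m n => q.2.2 f r) f' r' q
      = (Pi.single f' (Pi.single r' (1:ℝ)) : Fin m → Fin n → ℝ) f r := by
  have h : (fun q : Jet m n => q.2.2 f r) = ⇑(coordP f r) := rfl
  rw [pdpJ, h, ContinuousLinearMap.fderiv]
  rfl

lemma deltaX_coord {m n : ℕ} (φ : (Fin n → ℝ) → Matrix (Fin n) (Fin n) ℝ)
    (A : Fin m → Fin n → (Fin m → ℝ) × (Fin n → ℝ) → ℝ) (e m₀ : ℝ)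
    (f : Fin m) (r j : Fin n) (q : Jet m n) :
    deltaX φ A e m₀ (fun q => q.2.2 f r) j q = - N2 φ A e m₀ f r j q := by
  rw [deltaX, pdxJ_coord]
  simp only [pdpJ_coord, Pi.single_apply, apply_ite (fun g : Fin n → ℝ => g r)]
  simp

lemma christoffel_symm {k : ℕ} (g : (Fin k → ℝ) → Matrix (Fin k) (Fin k) ℝ)
    (X : Set (Fin k → ℝ)) (hX : IsOpen X) (hsymm : ∀ x ∈ X, (g x).IsSymm)
    (s r j : Fin k) (x : Fin k → ℝ) (hx : x ∈ X) :
    christoffel g s r j x = christoffel g s j r x := by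
  have hpd : ∀ i j d : Fin k, pd (fun y => g y i j) d x = pd (fun y => g y j i) d x := by
    intro i j d
    have hev : (fun y => g y i j) =ᶠ[nhds x] fun y => g y j i :=
      Filter.eventuallyEq_of_mem (hX.mem_nhds hx) fun y hy => ((hsymm y hy).apply i j).symm
    rw [pd, pd, hev.fderiv_eq]
  unfold christoffel
  congr 1
  refine Finset.sum_congr rfl fun d _ => ?_
  rw [hpd d j r, hpd r d j, hpd r j d]
  ring

/-- The spatial metrical deflection d-tensor of the multi-time
Hamilton space of electrodynamics satisfies
`Δ^{(i)}_{(a)j} = h*_{af} φ^{ir} p^f_{r|j}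
  = (e/(4m₀²c)) h_{af} φ^{ir} [A^{(f)}_{(r):j} + A^{(f)}_{(j):r}]`,
where `p^f_{r|j} = δp^f_r/δx^j − γ^s_{rj} p^f_s` and `h* = (4m₀c)⁻¹ h`; in
particular `Δ^{(i)}_{(a)j}` does not depend on the polymomenta `p`. -/
theorem spatial_metrical_deflection_of_electrodynamics
    {m n : ℕ} (hm : 1 ≤ m) (hn : 1 ≤ n)
    (T : Set (Fin m → ℝ)) (X : Set (Fin n → ℝ)) (hT : IsOpen T) (hX : IsOpen X)
    (h : (Fin m → ℝ) → Matrix (Fin m) (Fin m) ℝ)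
    (hsm : ∀ a b, ContDiffOn ℝ (⊤ : ℕ∞) (fun t => h t a b) T)
    (hpos : ∀ t ∈ T, (h t).PosDef)
    (φ : (Fin n → ℝ) → Matrix (Fin n) (Fin n) ℝ)
    (φsm : ∀ i j, ContDiffOn ℝ (⊤ : ℕ∞) (fun x => φ x i j) X)
    (φsymm : ∀ x ∈ X, (φ x).IsSymm) (φinv : ∀ x ∈ X, IsUnit (φ x).det)
    (m₀ e c : ℝ) (hm₀ : m₀ ≠ 0) (hc : 0 < c)
    (A : Fin m → Fin n → (Fin m → ℝ) × (Fin n → ℝ) → ℝ)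
    (hA : ∀ a i, ContDiffOn ℝ (⊤ : ℕ∞) (A a i) (T ×ˢ X)) :
    ∀ t ∈ T, ∀ x ∈ X, ∀ p : Fin m → Fin n → ℝ,
      ∀ a : Fin m, ∀ i j : Fin n,
        ∑ f, ∑ r, ((4 * m₀ * c)⁻¹ * h t a f) * (φ x)⁻¹ i r *
            -- `p^f_{r|j} = δp^f_r/δx^j − γ^s_{rj} p^f_s`
            (deltaX φ A e m₀ (fun q => q.2.2 f r) j (t, x, p)
              - ∑ s, christoffel φ s r j x * p f s)
        = (e / (4 * m₀ ^ 2 * c)) * ∑ f, ∑ r, h t a f * (φ x)⁻¹ i r *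
            -- `A^{(f)}_{(r):j} + A^{(f)}_{(j):r}`
            ((pdx (A f r) j (t, x) - ∑ s, christoffel φ s r j x * A f s (t, x))
              + (pdx (A f j) r (t, x)
                  - ∑ s, christoffel φ s j r x * A f s (t, x))) := by

  intro t ht x hx p a i j
  rw [Finset.mul_sum]
  simp_rw [Finset.mul_sum]
  refine Finset.sum_congr rfl fun f _ => Finset.sum_congr rfl fun r _ => ?_
  have hkey : ∀ s : Fin n, christoffel φ s j r x = christoffel φ s r j x :=
    fun s => christoffel_symm φ X hX φsymm s j r x hx
  have hA2 : (∑ s, christoffel φ s j r x * A f s (t, x))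
      = ∑ s, christoffel φ s r j x * A f s (t, x) :=
    Finset.sum_congr rfl fun s _ => by rw [hkey s]
  rw [deltaX_coord, hA2]
  have hN2 : N2 φ A e m₀ f r j (t, x, p)
      = (2 * e / m₀) * (∑ s, christoffel φ s r j x * A f s (t, x))
        - (∑ s, christoffel φ s r j x * p f s)
        - (e / m₀) * (pdx (A f r) j (t, x) + pdx (A f j) r (t, x)) := by
    rw [N2]
    congr 1
    rw [Finset.mul_sum, ← Finset.sum_sub_distrib]
    exact Finset.sum_congr rfl fun s _ => by ring
  rw [hN2]
  field_simp
  ring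

end
end

section
/- The first geometrical Maxwell-like equation holds for the polymomentum electromagnetic field of the multi-time Hamilton space of electrodynamics: for all indices a, b, i, j and all (t,x) ∈ T × X, F^{(i)}_{(a)j/b} := ∂F^{(i)}_{(a)j}/∂t^b − χ^g_{ab} F^{(i)}_{(g)j} = (e h_{af}/(8m₀²c)) · 𝒜_{{i,j}} { φ^{ir} [ ∂A^{(f)}_{(r)}/∂x^j + ∂A^{(f)}_{(j)}/∂x^r ]_{;b} − 2 φ^{ir} γ^s_{rj} A^{(f)}_{(s);b} }, where 𝒜_{{i,j}} denotes the alternating sum over i and j. -/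
open scoped BigOperators
open Set

noncomputable section

section calc1
variable {m n : ℕ} {f g : (Fin m → ℝ) × (Fin n → ℝ) → ℝ} {q : (Fin m → ℝ) × (Fin n → ℝ)} {b : Fin m}

lemma pdt_add (hf : DifferentiableAt ℝ f q) (hg : DifferentiableAt ℝ g q) :
    pdt (fun q => f q + g q) b q = pdt f b q + pdt g b q := by
  simp [pdt, fderiv_fun_add hf hg]

lemma pdt_sub (hf : DifferentiableAt ℝ f q) (hg : DifferentiableAt ℝ g q) :
    pdt (fun q => f q - g q) b q = pdt f b q - pdt g b q := by
  simp [pdt, fderiv_fun_sub hf hg]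

lemma pdt_mul (hf : DifferentiableAt ℝ f q) (hg : DifferentiableAt ℝ g q) :
    pdt (fun q => f q * g q) b q = f q * pdt g b q + g q * pdt f b q := by
  simp [pdt, fderiv_fun_mul hf hg]

lemma pdt_const_mul (hf : DifferentiableAt ℝ f q) (c : ℝ) :
    pdt (fun q => c * f q) b q = c * pdt f b q := by
  simp [pdt, fderiv_const_mul hf c]

lemma pdt_sum {ι : Type*} {s : Finset ι} {F : ι → (Fin m → ℝ) × (Fin n → ℝ) → ℝ}
    (hF : ∀ i ∈ s, DifferentiableAt ℝ (F i) q) :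
    pdt (fun q => ∑ i ∈ s, F i q) b q = ∑ i ∈ s, pdt (F i) b q := by
  simp [pdt, fderiv_fun_sum hF]

lemma pdt_comp_fst {g : (Fin m → ℝ) → ℝ} {t : Fin m → ℝ} {x : Fin n → ℝ}
    (hg : DifferentiableAt ℝ g t) :
    pdt (fun q : (Fin m → ℝ) × (Fin n → ℝ) => g q.1) b (t, x) = pd g b t := by
  have : fderiv ℝ (fun q : (Fin m → ℝ) × (Fin n → ℝ) => g q.1) (t, x)
      = (fderiv ℝ g t).comp (ContinuousLinearMap.fst ℝ (Fin m → ℝ) (Fin n → ℝ)) := by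
    rw [show (fun q : (Fin m → ℝ) × (Fin n → ℝ) => g q.1) = g ∘ Prod.fst from rfl]
    rw [fderiv_comp _ hg differentiableAt_fst, fderiv_fst]
  simp [pdt, pd, this]

lemma pdt_comp_snd {g : (Fin n → ℝ) → ℝ} {t : Fin m → ℝ} {x : Fin n → ℝ}
    (hg : DifferentiableAt ℝ g x) :
    pdt (fun q : (Fin m → ℝ) × (Fin n → ℝ) => g q.2) b (t, x) = 0 := by
  have : fderiv ℝ (fun q : (Fin m → ℝ) × (Fin n → ℝ) => g q.2) (t, x)
      = (fderiv ℝ g x).comp (ContinuousLinearMap.snd ℝ (Fin m → ℝ) (Fin n → ℝ)) := by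
    rw [show (fun q : (Fin m → ℝ) × (Fin n → ℝ) => g q.2) = g ∘ Prod.snd from rfl]
    rw [fderiv_comp _ hg differentiableAt_snd, fderiv_snd]
  simp [pdt, this]

lemma pd_congr_nhds {k : ℕ} {f g : (Fin k → ℝ) → ℝ} {x : Fin k → ℝ}
    (h : f =ᶠ[nhds x] g) (b : Fin k) : pd f b x = pd g b x := by
  rw [pd, pd, h.fderiv_eq]

end calc1

section diffM
variable {E : Type*} [NormedAddCommGroup E] [NormedSpace ℝ E] {k : ℕ}
  {M : E → Matrix (Fin k) (Fin k) ℝ} {x : E}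

lemma differentiableAt_matrix_det (hM : ∀ i j, DifferentiableAt ℝ (fun y => M y i j) x) :
    DifferentiableAt ℝ (fun y => (M y).det) x := by
  simp only [Matrix.det_apply']
  refine DifferentiableAt.fun_sum fun σ _ => DifferentiableAt.const_mul ?_ _
  exact (HasFDerivAt.finset_prod (u := Finset.univ) (g := fun i y => M y (σ i) i)
    fun i _ => (hM (σ i) i).hasFDerivAt).differentiableAt

lemma differentiableAt_matrix_inv_apply (hM : ∀ i j, DifferentiableAt ℝ (fun y => M y i j) x)
    (hdet : (M x).det ≠ 0) (i j : Fin k) :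
    DifferentiableAt ℝ (fun y => (M y)⁻¹ i j) x := by
  have hrw : ∀ y, (M y)⁻¹ i j = ((M y).det)⁻¹ * (M y).adjugate i j := by
    intro y
    rw [Matrix.inv_def]
    simp [Ring.inverse_eq_inv', Matrix.smul_apply, smul_eq_mul]
  simp only [hrw]
  refine ((differentiableAt_matrix_det hM).inv hdet).mul ?_
  simp only [Matrix.adjugate_apply]
  refine differentiableAt_matrix_det fun a c => ?_
  simp only [Matrix.updateRow_apply]
  by_cases hab : a = j
  · simp [hab]
  · simpa [hab] using hM a c

lemma differentiableAt_pd {f : (Fin k → ℝ) → ℝ} {x : Fin k → ℝ}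
    (hf : ContDiffAt ℝ (⊤ : ℕ∞) f x) (b : Fin k) : DifferentiableAt ℝ (pd f b) x := by
  have h1 : ContDiffAt ℝ (⊤ : ℕ∞) (fderiv ℝ f) x := hf.fderiv_right (by simp)
  exact (ContinuousLinearMap.apply ℝ ℝ (Pi.single b 1)).differentiableAt.comp x
    (h1.differentiableAt (by simp))

end diffM

section diffP
variable {m n : ℕ} {f : (Fin m → ℝ) × (Fin n → ℝ) → ℝ} {q : (Fin m → ℝ) × (Fin n → ℝ)}

lemma differentiableAt_pdx (hf : ContDiffAt ℝ (⊤ : ℕ∞) f q) (j : Fin n) :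
    DifferentiableAt ℝ (fun q' => pdx f j q') q := by
  have h1 : ContDiffAt ℝ (⊤ : ℕ∞) (fderiv ℝ f) q := hf.fderiv_right (by simp)
  exact (ContinuousLinearMap.apply ℝ ℝ ((0 : Fin m → ℝ), Pi.single j 1)).differentiableAt.comp q
    (h1.differentiableAt (by simp))

end diffP

section chunk2
open Matrix

lemma christoffel_symm_lower {k : ℕ} {φ : (Fin k → ℝ) → Matrix (Fin k) (Fin k) ℝ}
    {X : Set (Fin k → ℝ)} (hX : IsOpen X) (φsymm : ∀ x ∈ X, (φ x).IsSymm)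
    {x : Fin k → ℝ} (hx : x ∈ X) (s i j : Fin k) :
    christoffel φ s i j x = christoffel φ s j i x := by
  have hev : ∀ a b : Fin k, (fun y => φ y a b) =ᶠ[nhds x] (fun y => φ y b a) := by
    intro a b
    filter_upwards [hX.mem_nhds hx] with y hy
    exact (φsymm y hy).apply b a
  unfold christoffel
  congr 1
  refine Finset.sum_congr rfl fun d _ => ?_
  rw [pd_congr_nhds (hev d j) i, pd_congr_nhds (hev i d) j, pd_congr_nhds (hev i j) d]
  ring

lemma metric_compat {k : ℕ} {h : (Fin k → ℝ) → Matrix (Fin k) (Fin k) ℝ}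
    {T : Set (Fin k → ℝ)} (hT : IsOpen T) (hpos : ∀ t ∈ T, (h t).PosDef)
    {t : Fin k → ℝ} (ht : t ∈ T) (a f b : Fin k) :
    pd (fun s => h s a f) b t
      = ∑ g, christoffel h g a b t * h t g f + ∑ g, h t a g * christoffel h g f b t := by
  have hsym : ∀ p ∈ T, ∀ i j, h p i j = h p j i := by
    intro p hp i j
    have := (hpos p hp).1
    conv_lhs => rw [← this]
    simp [Matrix.conjTranspose_apply]
  have hdet : IsUnit (h t).det := isUnit_iff_ne_zero.mpr (ne_of_gt (hpos t ht).det_pos)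
  have htr : (h t)ᵀ = h t := by
    ext i j; simp [Matrix.transpose_apply, hsym t ht j i]
  have hts : ((h t)⁻¹)ᵀ = (h t)⁻¹ := by rw [Matrix.transpose_nonsing_inv, htr]
  have hinv_symm : ∀ g d, (h t)⁻¹ g d = (h t)⁻¹ d g := by
    intro g d
    conv_lhs => rw [← hts]
    rw [Matrix.transpose_apply]
  have delta1 : ∀ d f', (∑ g, (h t)⁻¹ g d * h t g f') = if d = f' then 1 else 0 := by
    intro d f'
    have : ∑ g, (h t)⁻¹ d g * h t g f' = ((h t)⁻¹ * h t) d f' := (Matrix.mul_apply).symm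
    rw [Finset.sum_congr rfl fun g _ => by rw [hinv_symm g d], this,
      Matrix.nonsing_inv_mul _ hdet, Matrix.one_apply]
  have delta2 : ∀ d, (∑ g, h t a g * (h t)⁻¹ g d) = if a = d then 1 else 0 := by
    intro d
    have : ∑ g, h t a g * (h t)⁻¹ g d = (h t * (h t)⁻¹) a d := (Matrix.mul_apply).symm
    rw [this, Matrix.mul_nonsing_inv _ hdet, Matrix.one_apply]
  have e1 : ∑ g, christoffel h g a b t * h t g f
      = (1/2) * (pd (fun s => h s f b) a t + pd (fun s => h s a f) b t
          - pd (fun s => h s a b) f t) := by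
    unfold christoffel
    calc ∑ g, ((1/2) * ∑ d, (h t)⁻¹ g d *
            (pd (fun s => h s d b) a t + pd (fun s => h s a d) b t - pd (fun s => h s a b) d t))
          * h t g f
        = ∑ g, ∑ d, (1/2) * (((h t)⁻¹ g d * h t g f) *
            (pd (fun s => h s d b) a t + pd (fun s => h s a d) b t
              - pd (fun s => h s a b) d t)) := by
          refine Finset.sum_congr rfl fun g _ => ?_
          simp only [Finset.sum_mul, Finset.mul_sum]
          exact Finset.sum_congr rfl fun d _ => by ring
      _ = ∑ d, (1/2) * ((∑ g, (h t)⁻¹ g d * h t g f) *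
            (pd (fun s => h s d b) a t + pd (fun s => h s a d) b t
              - pd (fun s => h s a b) d t)) := by
          rw [Finset.sum_comm]
          refine Finset.sum_congr rfl fun d _ => ?_
          simp only [Finset.sum_mul, Finset.mul_sum]
          try exact Finset.sum_congr rfl fun g _ => by ring
      _ = ∑ d, (1/2) * ((if d = f then 1 else 0) *
            (pd (fun s => h s d b) a t + pd (fun s => h s a d) b t
              - pd (fun s => h s a b) d t)) := by
          exact Finset.sum_congr rfl fun d _ => by rw [delta1]
      _ = (1/2) * (pd (fun s => h s f b) a t + pd (fun s => h s a f) b t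
            - pd (fun s => h s a b) f t) := by
          rw [Finset.sum_eq_single f]
          · simp
          · intro d _ hd; simp [hd]
          · intro hf; exact absurd (Finset.mem_univ f) hf
  have e2 : ∑ g, h t a g * christoffel h g f b t
      = (1/2) * (pd (fun s => h s a b) f t + pd (fun s => h s f a) b t
          - pd (fun s => h s f b) a t) := by
    unfold christoffel
    calc ∑ g, h t a g * ((1/2) * ∑ d, (h t)⁻¹ g d *
            (pd (fun s => h s d b) f t + pd (fun s => h s f d) b t - pd (fun s => h s f b) d t))
        = ∑ g, ∑ d, (1/2) * ((h t a g * (h t)⁻¹ g d) *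
            (pd (fun s => h s d b) f t + pd (fun s => h s f d) b t
              - pd (fun s => h s f b) d t)) := by
          refine Finset.sum_congr rfl fun g _ => ?_
          simp only [Finset.sum_mul, Finset.mul_sum]
          exact Finset.sum_congr rfl fun d _ => by ring
      _ = ∑ d, (1/2) * ((∑ g, h t a g * (h t)⁻¹ g d) *
            (pd (fun s => h s d b) f t + pd (fun s => h s f d) b t
              - pd (fun s => h s f b) d t)) := by
          rw [Finset.sum_comm]
          refine Finset.sum_congr rfl fun d _ => ?_
          simp only [Finset.sum_mul, Finset.mul_sum]
          try exact Finset.sum_congr rfl fun g _ => by ring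
      _ = ∑ d, (1/2) * ((if a = d then 1 else 0) *
            (pd (fun s => h s d b) f t + pd (fun s => h s f d) b t
              - pd (fun s => h s f b) d t)) := by
          exact Finset.sum_congr rfl fun d _ => by rw [delta2]
      _ = (1/2) * (pd (fun s => h s a b) f t + pd (fun s => h s f a) b t
            - pd (fun s => h s f b) a t) := by
          rw [Finset.sum_eq_single a]
          · simp
          · intro d _ hd; simp [Ne.symm hd]
          · intro hf; exact absurd (Finset.mem_univ a) hf
  have hfa : pd (fun s => h s f a) b t = pd (fun s => h s a f) b t := by
    refine pd_congr_nhds ?_ b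
    filter_upwards [hT.mem_nhds ht] with y hy
    exact hsym y hy f a
  rw [e1, e2, hfa]
  ring

end chunk2

section chunk3

lemma alg_helper {m n : ℕ} (Hf dh χab : Fin m → ℝ) (χtb Hm : Fin m → Fin m → ℝ)
    (Φ : Fin n → ℝ) (DxS DtDx Dt Aa : Fin m → Fin n → ℝ) (J : Fin n → Fin n → ℝ)
    (compat : ∀ f, dh f = (∑ g, χab g * Hm g f) + ∑ g, Hf g * χtb g f) :
    (∑ f, ∑ r, (dh f * Φ r * (DxS f r - ∑ s, J s r * Aa f s)
        + Hf f * Φ r * (DtDx f r - ∑ s, J s r * Dt f s)))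
      - ∑ g, χab g * ∑ f, ∑ r, Hm g f * Φ r * (DxS f r - ∑ s, J s r * Aa f s)
    = ∑ f, Hf f * ((∑ r, Φ r * (DtDx f r + ∑ g, DxS g r * χtb f g))
        - ∑ r, ∑ s, Φ r * J s r * (Dt f s + ∑ g, Aa g s * χtb f g)) := by
  set K : Fin m → Fin n → ℝ := fun f r => DxS f r - ∑ s, J s r * Aa f s with hK
  set Mv : Fin m → Fin n → ℝ := fun f r => DtDx f r - ∑ s, J s r * Dt f s with hM
  set S : Fin m → ℝ := fun f => ∑ r, Φ r * K f r with hS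
  -- inner sums with a fixed first factor
  have pull : ∀ (c : ℝ) (f : Fin m), ∑ r, c * Φ r * K f r = c * S f := by
    intro c f
    rw [hS, Finset.mul_sum]
    exact Finset.sum_congr rfl fun r _ => by ring
  have hL : (∑ f, ∑ r, (dh f * Φ r * K f r + Hf f * Φ r * Mv f r))
      - ∑ g, χab g * ∑ f, ∑ r, Hm g f * Φ r * K f r
      = (∑ f, ∑ r, Hf f * Φ r * Mv f r)
        + ∑ f, ∑ g, Hf g * χtb g f * S f := by
    have split : (∑ f, ∑ r, (dh f * Φ r * K f r + Hf f * Φ r * Mv f r))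
        = (∑ f, dh f * S f) + ∑ f, ∑ r, Hf f * Φ r * Mv f r := by
      rw [← Finset.sum_add_distrib]
      refine Finset.sum_congr rfl fun f _ => ?_
      rw [Finset.sum_add_distrib, pull]
    have hA3 : ∑ g, χab g * ∑ f, ∑ r, Hm g f * Φ r * K f r
        = ∑ f, (∑ g, χab g * Hm g f) * S f := by
      calc ∑ g, χab g * ∑ f, ∑ r, Hm g f * Φ r * K f r
          = ∑ g, ∑ f, χab g * (Hm g f * S f) := by
            refine Finset.sum_congr rfl fun g _ => ?_
            rw [Finset.mul_sum]
            refine Finset.sum_congr rfl fun f _ => ?_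
            rw [pull]
        _ = ∑ f, ∑ g, χab g * (Hm g f * S f) := Finset.sum_comm
        _ = ∑ f, (∑ g, χab g * Hm g f) * S f := by
            refine Finset.sum_congr rfl fun f _ => ?_
            rw [Finset.sum_mul]
            exact Finset.sum_congr rfl fun g _ => by ring
    have hdh : ∑ f, dh f * S f
        = (∑ f, (∑ g, χab g * Hm g f) * S f) + ∑ f, ∑ g, Hf g * χtb g f * S f := by
      rw [← Finset.sum_add_distrib]
      refine Finset.sum_congr rfl fun f _ => ?_
      rw [compat f, add_mul, Finset.sum_mul, Finset.sum_mul]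
    rw [split, hdh, hA3]
    ring
  have hR : ∑ f, Hf f * ((∑ r, Φ r * (DtDx f r + ∑ g, DxS g r * χtb f g))
        - ∑ r, ∑ s, Φ r * J s r * (Dt f s + ∑ g, Aa g s * χtb f g))
      = (∑ f, ∑ r, Hf f * Φ r * Mv f r)
        + ∑ f, ∑ g, Hf f * χtb f g * S g := by
    rw [← Finset.sum_add_distrib]
    refine Finset.sum_congr rfl fun f _ => ?_
    -- expand each piece for fixed f
    have e1 : ∑ r, Φ r * (DtDx f r + ∑ g, DxS g r * χtb f g)
        = (∑ r, Φ r * DtDx f r) + ∑ g, χtb f g * ∑ r, Φ r * DxS g r := by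
      calc ∑ r, Φ r * (DtDx f r + ∑ g, DxS g r * χtb f g)
          = ∑ r, (Φ r * DtDx f r + ∑ g, χtb f g * (Φ r * DxS g r)) := by
            refine Finset.sum_congr rfl fun r _ => ?_
            rw [mul_add, Finset.mul_sum]
            refine congrArg _ ?_
            exact Finset.sum_congr rfl fun g _ => by ring
        _ = (∑ r, Φ r * DtDx f r) + ∑ r, ∑ g, χtb f g * (Φ r * DxS g r) :=
            Finset.sum_add_distrib
        _ = (∑ r, Φ r * DtDx f r) + ∑ g, χtb f g * ∑ r, Φ r * DxS g r := by
            rw [Finset.sum_comm (f := fun r g => χtb f g * (Φ r * DxS g r))]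
            refine congrArg _ (Finset.sum_congr rfl fun g _ => ?_)
            rw [Finset.mul_sum]
    have e2 : ∑ r, ∑ s, Φ r * J s r * (Dt f s + ∑ g, Aa g s * χtb f g)
        = (∑ r, Φ r * (∑ s, J s r * Dt f s))
          + ∑ g, χtb f g * ∑ r, Φ r * (∑ s, J s r * Aa g s) := by
      calc ∑ r, ∑ s, Φ r * J s r * (Dt f s + ∑ g, Aa g s * χtb f g)
          = ∑ r, ∑ s, (Φ r * (J s r * Dt f s)
              + ∑ g, χtb f g * (Φ r * (J s r * Aa g s))) := by
            refine Finset.sum_congr rfl fun r _ => Finset.sum_congr rfl fun s _ => ?_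
            rw [mul_add, Finset.mul_sum]
            refine congrArg₂ _ (by ring) ?_
            exact Finset.sum_congr rfl fun g _ => by ring
        _ = (∑ r, ∑ s, Φ r * (J s r * Dt f s))
            + ∑ r, ∑ s, ∑ g, χtb f g * (Φ r * (J s r * Aa g s)) := by
            rw [← Finset.sum_add_distrib]
            exact Finset.sum_congr rfl fun r _ => Finset.sum_add_distrib
        _ = (∑ r, Φ r * (∑ s, J s r * Dt f s))
            + ∑ g, χtb f g * ∑ r, Φ r * (∑ s, J s r * Aa g s) := by
            refine congrArg₂ _ (Finset.sum_congr rfl fun r _ => (Finset.mul_sum _ _ _).symm) ?_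
            calc ∑ r, ∑ s, ∑ g, χtb f g * (Φ r * (J s r * Aa g s))
                = ∑ r, ∑ g, ∑ s, χtb f g * (Φ r * (J s r * Aa g s)) :=
                  Finset.sum_congr rfl fun r _ => Finset.sum_comm
              _ = ∑ g, ∑ r, ∑ s, χtb f g * (Φ r * (J s r * Aa g s)) := Finset.sum_comm
              _ = ∑ g, χtb f g * ∑ r, Φ r * (∑ s, J s r * Aa g s) := by
                  refine Finset.sum_congr rfl fun g _ => ?_
                  rw [Finset.mul_sum]
                  refine Finset.sum_congr rfl fun r _ => ?_
                  rw [Finset.mul_sum, Finset.mul_sum]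
                  try exact Finset.sum_congr rfl fun s _ => by ring
    rw [e1, e2]
    have e3 : ∑ r, Hf f * Φ r * Mv f r
        = Hf f * ((∑ r, Φ r * DtDx f r) - ∑ r, Φ r * (∑ s, J s r * Dt f s)) := by
      rw [mul_sub, Finset.mul_sum, Finset.mul_sum, ← Finset.sum_sub_distrib]
      refine Finset.sum_congr rfl fun r _ => ?_
      simp only [hM]
      ring
    have e4 : ∑ g, Hf f * χtb f g * S g
        = Hf f * ((∑ g, χtb f g * ∑ r, Φ r * DxS g r)
            - ∑ g, χtb f g * ∑ r, Φ r * (∑ s, J s r * Aa g s)) := by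
      rw [mul_sub, Finset.mul_sum, Finset.mul_sum, ← Finset.sum_sub_distrib]
      refine Finset.sum_congr rfl fun g _ => ?_
      have hSg : S g
          = (∑ r, Φ r * DxS g r) - ∑ r, Φ r * (∑ s, J s r * Aa g s) := by
        rw [← Finset.sum_sub_distrib]
        show ∑ r, Φ r * K g r = _
        refine Finset.sum_congr rfl fun r _ => ?_
        simp only [hK]
        ring
      rw [hSg]
      ring
    rw [e3, e4]
    ring
  rw [hL, hR]
  refine congrArg _ ?_
  rw [Finset.sum_comm (f := fun f g => Hf g * χtb g f * S f)]
end chunk3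

/-- The first geometrical Maxwell-like equation for the polymomentum
electromagnetic field of the multi-time Hamilton space of electrodynamics:
`F^{(i)}_{(a)j/b} = (e h_{af}/(8m₀²c)) 𝒜_{{i,j}}{φ^{ir}[∂A^{(f)}_{(r)}/∂x^j +
∂A^{(f)}_{(j)}/∂x^r]_{;b} − 2φ^{ir} γ^s_{rj} A^{(f)}_{(s);b}}`. -/
theorem first_maxwell_like_equation_of_electrodynamics
    {m n : ℕ} (hm : 1 ≤ m) (hn : 1 ≤ n)
    (T : Set (Fin m → ℝ)) (X : Set (Fin n → ℝ)) (hT : IsOpen T) (hX : IsOpen X)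
    (h : (Fin m → ℝ) → Matrix (Fin m) (Fin m) ℝ)
    (hsm : ∀ a b, ContDiffOn ℝ (⊤ : ℕ∞) (fun t => h t a b) T)
    (hpos : ∀ t ∈ T, (h t).PosDef)
    (φ : (Fin n → ℝ) → Matrix (Fin n) (Fin n) ℝ)
    (φsm : ∀ i j, ContDiffOn ℝ (⊤ : ℕ∞) (fun x => φ x i j) X)
    (φsymm : ∀ x ∈ X, (φ x).IsSymm) (φinv : ∀ x ∈ X, IsUnit (φ x).det)
    (m₀ e c : ℝ) (hm₀ : m₀ ≠ 0) (hc : 0 < c)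
    (A : Fin m → Fin n → (Fin m → ℝ) × (Fin n → ℝ) → ℝ)
    (hA : ∀ a i, ContDiffOn ℝ (⊤ : ℕ∞) (A a i) (T ×ˢ X)) :
    ∀ t ∈ T, ∀ x ∈ X, ∀ a b : Fin m, ∀ i j : Fin n,
      -- `A^{(f)}_{(i'):j'} = ∂A^{(f)}_{(i')}/∂x^{j'} − γ^s_{i'j'} A^{(f)}_{(s)}`
      let Acov : Fin m → Fin n → Fin n → ((Fin m → ℝ) × (Fin n → ℝ)) → ℝ :=
        fun f i' j' q => pdx (A f i') j' q - ∑ s, christoffel φ s i' j' q.2 * A f s q;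
      -- the polymomentum electromagnetic field
      -- `F^{(i)}_{(a)j} = (e/(8m₀²c)) 𝒜_{{i,j}}{h_{af} φ^{ir}[A^{(f)}_{(r):j} + A^{(f)}_{(j):r}]}`
      let F : Fin m → Fin n → Fin n → ((Fin m → ℝ) × (Fin n → ℝ)) → ℝ :=
        fun a' i' j' q =>
          (e / (8 * m₀ ^ 2 * c)) *
            (∑ f, ∑ r, h q.1 a' f * (φ q.2)⁻¹ i' r * (Acov f r j' q + Acov f j' r q)
              - ∑ f, ∑ r, h q.1 a' f * (φ q.2)⁻¹ j' r * (Acov f r i' q + Acov f i' r q));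
      -- `φ^{ir}[∂A^{(f)}_{(r)}/∂x^j + ∂A^{(f)}_{(j)}/∂x^r]_{;b} − 2 φ^{ir} γ^s_{rj} A^{(f)}_{(s);b}`
      let E : Fin m → Fin n → Fin n → ℝ := fun f i' j' =>
        ∑ r, (φ x)⁻¹ i' r *
            (pdt (fun q => pdx (A f r) j' q + pdx (A f j') r q) b (t, x)
              + ∑ g, (pdx (A g r) j' (t, x) + pdx (A g j') r (t, x))
                  * christoffel h f g b t)
          - 2 * ∑ r, ∑ s, (φ x)⁻¹ i' r * christoffel φ s r j' x *
              (pdt (A f s) b (t, x) + ∑ g, A g s (t, x) * christoffel h f g b t);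
      -- `F^{(i)}_{(a)j/b} = ∂F^{(i)}_{(a)j}/∂t^b − χ^g_{ab} F^{(i)}_{(g)j}`
      pdt (F a i j) b (t, x) - ∑ g, christoffel h g a b t * F g i j (t, x)
        = (e / (8 * m₀ ^ 2 * c)) * ∑ f, h t a f * (E f i j - E f j i) := by
  intro t ht x hx a b i j Acov F E
  have hqn : T ×ˢ X ∈ nhds ((t, x) : (Fin m → ℝ) × (Fin n → ℝ)) :=
    (hT.prod hX).mem_nhds ⟨ht, hx⟩
  have cA : ∀ f s, ContDiffAt ℝ (⊤ : ℕ∞) (A f s) (t, x) := fun f s => (hA f s).contDiffAt hqn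
  have dA : ∀ f s, DifferentiableAt ℝ (A f s) (t, x) := fun f s => (cA f s).differentiableAt (by simp)
  have dDx : ∀ f r j', DifferentiableAt ℝ (fun q => pdx (A f r) j' q) (t, x) :=
    fun f r j' => differentiableAt_pdx (cA f r) j'
  have cφ : ∀ i' j', ContDiffAt ℝ (⊤ : ℕ∞) (fun y => φ y i' j') x :=
    fun i' j' => (φsm i' j').contDiffAt (hX.mem_nhds hx)
  have dφ : ∀ i' j', DifferentiableAt ℝ (fun y => φ y i' j') x :=
    fun i' j' => (cφ i' j').differentiableAt (by simp)
  have hdetφ : (φ x).det ≠ 0 := (φinv x hx).ne_zero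
  have dΦ : ∀ i' r, DifferentiableAt ℝ (fun y => (φ y)⁻¹ i' r) x :=
    fun i' r => differentiableAt_matrix_inv_apply (fun u v => dφ u v) hdetφ i' r
  have dχφ : ∀ s i' j', DifferentiableAt ℝ (christoffel φ s i' j') x := by
    intro s i' j'
    unfold christoffel
    refine DifferentiableAt.const_mul ?_ _
    refine DifferentiableAt.fun_sum fun d _ => ?_
    exact (dΦ s d).mul (((differentiableAt_pd (cφ d j') i').add
      (differentiableAt_pd (cφ i' d) j')).sub (differentiableAt_pd (cφ i' j') d))
  have dht : ∀ a' f, DifferentiableAt ℝ (fun s => h s a' f) t :=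
    fun a' f => ((hsm a' f).contDiffAt (hT.mem_nhds ht)).differentiableAt (by simp)
  have dhq : ∀ a' f, DifferentiableAt ℝ
      (fun q : (Fin m → ℝ) × (Fin n → ℝ) => h q.1 a' f) (t, x) :=
    fun a' f => (dht a' f).fun_comp' (f := Prod.fst) (t, x) differentiableAt_fst
  have dΦq : ∀ i' r, DifferentiableAt ℝ
      (fun q : (Fin m → ℝ) × (Fin n → ℝ) => (φ q.2)⁻¹ i' r) (t, x) :=
    fun i' r => (dΦ i' r).fun_comp' (f := Prod.snd) (t, x) differentiableAt_snd
  have dχφq : ∀ s i' j', DifferentiableAt ℝ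
      (fun q : (Fin m → ℝ) × (Fin n → ℝ) => christoffel φ s i' j' q.2) (t, x) :=
    fun s i' j' => (dχφ s i' j').fun_comp' (f := Prod.snd) (t, x) differentiableAt_snd
  have dAcov : ∀ f i' j', DifferentiableAt ℝ (Acov f i' j') (t, x) := by
    intro f i' j'
    show DifferentiableAt ℝ
      (fun q => pdx (A f i') j' q - ∑ s, christoffel φ s i' j' q.2 * A f s q) (t, x)
    exact (dDx f i' j').sub (DifferentiableAt.fun_sum fun s _ => (dχφq s i' j').mul (dA f s))
  have dK : ∀ f r j', DifferentiableAt ℝ (fun q => Acov f r j' q + Acov f j' r q) (t, x) :=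
    fun f r j' => (dAcov f r j').add (dAcov f j' r)
  have dTerm : ∀ a' i' j' f r, DifferentiableAt ℝ
      (fun q : (Fin m → ℝ) × (Fin n → ℝ) =>
        h q.1 a' f * (φ q.2)⁻¹ i' r * (Acov f r j' q + Acov f j' r q)) (t, x) :=
    fun a' i' j' f r => ((dhq a' f).mul (dΦq i' r)).mul (dK f r j')
  have dS : ∀ a' i' j', DifferentiableAt ℝ
      (fun q => ∑ f, ∑ r, h q.1 a' f * (φ q.2)⁻¹ i' r * (Acov f r j' q + Acov f j' r q)) (t, x) :=
    fun a' i' j' => DifferentiableAt.fun_sum fun f _ =>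
      DifferentiableAt.fun_sum fun r _ => dTerm a' i' j' f r
  have pdt_hq : ∀ a' f, pdt (fun q : (Fin m → ℝ) × (Fin n → ℝ) => h q.1 a' f) b (t, x)
      = pd (fun s => h s a' f) b t := fun a' f => pdt_comp_fst (dht a' f)
  have pdt_Φq : ∀ i' r, pdt (fun q : (Fin m → ℝ) × (Fin n → ℝ) => (φ q.2)⁻¹ i' r) b (t, x) = 0 :=
    fun i' r => pdt_comp_snd (dΦ i' r)
  have pdt_Acov : ∀ f r j', pdt (Acov f r j') b (t, x)
      = pdt (fun q => pdx (A f r) j' q) b (t, x)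
        - ∑ s, christoffel φ s r j' x * pdt (A f s) b (t, x) := by
    intro f r j'
    show pdt (fun q => pdx (A f r) j' q - ∑ s, christoffel φ s r j' q.2 * A f s q) b (t, x) = _
    rw [pdt_sub (dDx f r j') (DifferentiableAt.fun_sum fun s _ => (dχφq s r j').fun_mul (dA f s)),
      pdt_sum fun s _ => (dχφq s r j').fun_mul (dA f s)]
    refine congrArg₂ _ rfl (Finset.sum_congr rfl fun s _ => ?_)
    rw [pdt_mul (dχφq s r j') (dA f s), pdt_comp_snd (dχφ s r j')]
    simp
  have pdt_S : ∀ i' j',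
      pdt (fun q => ∑ f, ∑ r, h q.1 a f * (φ q.2)⁻¹ i' r * (Acov f r j' q + Acov f j' r q)) b (t, x)
      = ∑ f, ∑ r, (pd (fun s => h s a f) b t * (φ x)⁻¹ i' r
            * (Acov f r j' (t, x) + Acov f j' r (t, x))
          + h t a f * (φ x)⁻¹ i' r
            * (pdt (Acov f r j') b (t, x) + pdt (Acov f j' r) b (t, x))) := by
    intro i' j'
    rw [pdt_sum fun f _ => DifferentiableAt.fun_sum fun r _ => dTerm a i' j' f r]
    refine Finset.sum_congr rfl fun f _ => ?_
    rw [pdt_sum fun r _ => dTerm a i' j' f r]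
    refine Finset.sum_congr rfl fun r _ => ?_
    rw [pdt_mul ((dhq a f).fun_mul (dΦq i' r)) (dK f r j'),
      pdt_mul (dhq a f) (dΦq i' r),
      pdt_add (dAcov f r j') (dAcov f j' r), pdt_hq, pdt_Φq]
    simp
    try ring
  have Gsym : ∀ s r j', christoffel φ s r j' x = christoffel φ s j' r x :=
    fun s r j' => christoffel_symm_lower hX φsymm hx s r j'
  have compat : ∀ f, pd (fun s => h s a f) b t
      = (∑ g, christoffel h g a b t * h t g f) + ∑ g, h t a g * christoffel h g f b t :=
    fun f => metric_compat hT hpos ht a f b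
  have main : ∀ i' j' : Fin n,
      (∑ f, ∑ r, (pd (fun s => h s a f) b t * (φ x)⁻¹ i' r
            * (Acov f r j' (t, x) + Acov f j' r (t, x))
          + h t a f * (φ x)⁻¹ i' r
            * (pdt (Acov f r j') b (t, x) + pdt (Acov f j' r) b (t, x))))
        - ∑ g, christoffel h g a b t *
            ∑ f, ∑ r, h t g f * (φ x)⁻¹ i' r * (Acov f r j' (t, x) + Acov f j' r (t, x))
      = ∑ f, h t a f * E f i' j' := by
    intro i' j'
    have hKval : ∀ f r, Acov f r j' (t, x) + Acov f j' r (t, x)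
        = (pdx (A f r) j' (t, x) + pdx (A f j') r (t, x))
          - ∑ s, (2 * christoffel φ s r j' x) * A f s (t, x) := by
      intro f r
      show (pdx (A f r) j' (t, x) - ∑ s, christoffel φ s r j' x * A f s (t, x))
          + (pdx (A f j') r (t, x) - ∑ s, christoffel φ s j' r x * A f s (t, x)) = _
      have e1 : ∑ s, christoffel φ s j' r x * A f s (t, x)
          = ∑ s, christoffel φ s r j' x * A f s (t, x) :=
        Finset.sum_congr rfl fun s _ => by rw [← Gsym s r j']
      have e2 : ∑ s, (2 * christoffel φ s r j' x) * A f s (t, x)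
          = 2 * ∑ s, christoffel φ s r j' x * A f s (t, x) := by
        rw [Finset.mul_sum]
        exact Finset.sum_congr rfl fun s _ => by ring
      rw [e1, e2]
      ring
    have hMval : ∀ f r, pdt (Acov f r j') b (t, x) + pdt (Acov f j' r) b (t, x)
        = pdt (fun q => pdx (A f r) j' q + pdx (A f j') r q) b (t, x)
          - ∑ s, (2 * christoffel φ s r j' x) * pdt (A f s) b (t, x) := by
      intro f r
      rw [pdt_Acov f r j', pdt_Acov f j' r, pdt_add (dDx f r j') (dDx f j' r)]
      have e1 : ∑ s, christoffel φ s j' r x * pdt (A f s) b (t, x)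
          = ∑ s, christoffel φ s r j' x * pdt (A f s) b (t, x) :=
        Finset.sum_congr rfl fun s _ => by rw [← Gsym s r j']
      have e2 : ∑ s, (2 * christoffel φ s r j' x) * pdt (A f s) b (t, x)
          = 2 * ∑ s, christoffel φ s r j' x * pdt (A f s) b (t, x) := by
        rw [Finset.mul_sum]
        exact Finset.sum_congr rfl fun s _ => by ring
      rw [e1, e2]
      ring
    calc (∑ f, ∑ r, (pd (fun s => h s a f) b t * (φ x)⁻¹ i' r
            * (Acov f r j' (t, x) + Acov f j' r (t, x))
          + h t a f * (φ x)⁻¹ i' r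
            * (pdt (Acov f r j') b (t, x) + pdt (Acov f j' r) b (t, x))))
        - ∑ g, christoffel h g a b t *
            ∑ f, ∑ r, h t g f * (φ x)⁻¹ i' r * (Acov f r j' (t, x) + Acov f j' r (t, x))
        = (∑ f, ∑ r, (pd (fun s => h s a f) b t * (φ x)⁻¹ i' r
              * ((pdx (A f r) j' (t, x) + pdx (A f j') r (t, x))
                - ∑ s, (2 * christoffel φ s r j' x) * A f s (t, x))
            + h t a f * (φ x)⁻¹ i' r
              * (pdt (fun q => pdx (A f r) j' q + pdx (A f j') r q) b (t, x)
                - ∑ s, (2 * christoffel φ s r j' x) * pdt (A f s) b (t, x))))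
          - ∑ g, christoffel h g a b t *
              ∑ f, ∑ r, h t g f * (φ x)⁻¹ i' r
                * ((pdx (A f r) j' (t, x) + pdx (A f j') r (t, x))
                  - ∑ s, (2 * christoffel φ s r j' x) * A f s (t, x)) := by
          refine congrArg₂ _ ?_ ?_
          · exact Finset.sum_congr rfl fun f _ => Finset.sum_congr rfl fun r _ => by
              rw [hKval f r, hMval f r]
          · refine Finset.sum_congr rfl fun g _ => congrArg _ ?_
            exact Finset.sum_congr rfl fun f _ => Finset.sum_congr rfl fun r _ => by
              rw [hKval f r]
      _ = ∑ f, h t a f *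
            ((∑ r, (φ x)⁻¹ i' r *
                (pdt (fun q => pdx (A f r) j' q + pdx (A f j') r q) b (t, x)
                  + ∑ g, (pdx (A g r) j' (t, x) + pdx (A g j') r (t, x))
                      * christoffel h f g b t))
              - ∑ r, ∑ s, (φ x)⁻¹ i' r * (2 * christoffel φ s r j' x) *
                  (pdt (A f s) b (t, x)
                    + ∑ g, A g s (t, x) * christoffel h f g b t)) :=
          alg_helper (fun f => h t a f) (fun f => pd (fun s => h s a f) b t)
            (fun g => christoffel h g a b t) (fun u v => christoffel h u v b t)
            (fun g f => h t g f) (fun r => (φ x)⁻¹ i' r)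
            (fun f r => pdx (A f r) j' (t, x) + pdx (A f j') r (t, x))
            (fun f r => pdt (fun q => pdx (A f r) j' q + pdx (A f j') r q) b (t, x))
            (fun f s => pdt (A f s) b (t, x))
            (fun f s => A f s (t, x))
            (fun s r => 2 * christoffel φ s r j' x)
            compat
      _ = ∑ f, h t a f * E f i' j' := by
          refine Finset.sum_congr rfl fun f _ => congrArg _ ?_
          show _ = ∑ r, (φ x)⁻¹ i' r *
              (pdt (fun q => pdx (A f r) j' q + pdx (A f j') r q) b (t, x)
                + ∑ g, (pdx (A g r) j' (t, x) + pdx (A g j') r (t, x))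
                    * christoffel h f g b t)
            - 2 * ∑ r, ∑ s, (φ x)⁻¹ i' r * christoffel φ s r j' x *
                (pdt (A f s) b (t, x) + ∑ g, A g s (t, x) * christoffel h f g b t)
          refine congrArg₂ _ rfl ?_
          rw [Finset.mul_sum]
          refine Finset.sum_congr rfl fun r _ => ?_
          rw [Finset.mul_sum]
          refine Finset.sum_congr rfl fun s _ => ?_
          ring
  -- assemble
  simp only [F]
  have hC : pdt (fun q => e / (8 * m₀ ^ 2 * c) *
        (∑ f, ∑ r, h q.1 a f * (φ q.2)⁻¹ i r * (Acov f r j q + Acov f j r q)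
          - ∑ f, ∑ r, h q.1 a f * (φ q.2)⁻¹ j r * (Acov f r i q + Acov f i r q))) b (t, x)
      = e / (8 * m₀ ^ 2 * c) *
        (pdt (fun q => ∑ f, ∑ r, h q.1 a f * (φ q.2)⁻¹ i r * (Acov f r j q + Acov f j r q)) b (t, x)
          - pdt (fun q => ∑ f, ∑ r, h q.1 a f * (φ q.2)⁻¹ j r
              * (Acov f r i q + Acov f i r q)) b (t, x)) := by
    rw [pdt_const_mul ((dS a i j).fun_sub (dS a j i)), pdt_sub (dS a i j) (dS a j i)]
  rw [hC, pdt_S i j, pdt_S j i]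
  have hsplit : ∑ g, christoffel h g a b t * (e / (8 * m₀ ^ 2 * c) *
        ((∑ f, ∑ r, h t g f * (φ x)⁻¹ i r * (Acov f r j (t, x) + Acov f j r (t, x)))
          - ∑ f, ∑ r, h t g f * (φ x)⁻¹ j r * (Acov f r i (t, x) + Acov f i r (t, x))))
      = e / (8 * m₀ ^ 2 * c) *
        ((∑ g, christoffel h g a b t *
            ∑ f, ∑ r, h t g f * (φ x)⁻¹ i r * (Acov f r j (t, x) + Acov f j r (t, x)))
          - ∑ g, christoffel h g a b t *
            ∑ f, ∑ r, h t g f * (φ x)⁻¹ j r * (Acov f r i (t, x) + Acov f i r (t, x))) := by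
    rw [mul_sub, Finset.mul_sum, Finset.mul_sum, ← Finset.sum_sub_distrib]
    exact Finset.sum_congr rfl fun g _ => by ring
  rw [hsplit]
  have hRHS : ∑ f, h t a f * (E f i j - E f j i)
      = (∑ f, h t a f * E f i j) - ∑ f, h t a f * E f j i := by
    rw [← Finset.sum_sub_distrib]
    exact Finset.sum_congr rfl fun f _ => mul_sub _ _ _
  rw [hRHS, ← main i j, ← main j i]
  ring

end
end
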